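/- There exist a constant K₁ > 2 and a positive constant C_{K₁,λ} such that for all x,y ∈ ℝ₊ with y > K₁·x, one has R_{Δ_λ}(x,y) ≥ C_{K₁,λ} · x / y^{2λ+2}. -/

import Mathlib

open MeasureTheory Real Set Filter

/-- The Riesz kernel `R_{Δ_λ}(x,y)`. -/
noncomputable def rieszKernel (lam x y : ℝ) : ℝ :=
  -(2 * lam / π) * ∫ θ in (0:ℝ)..π,
    ((x - y * Real.cos θ) * Real.sin θ ^ (2*lam - 1)) /
      ((x^2 + y^2 - 2*x*y*Real.cos θ) ^ (lam + 1))

/-!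
Folding `θ ↦ π - θ`, the integral over `[0, π]` becomes an integral over `[0, π/2]` of
`sin θ ^ (2λ-1) * ((x - y c) / u ^ p + (x + y c) / v ^ p)`, where `c = cos θ ≥ 0`,
`p = λ + 1` and `u, v = x² + y² ∓ 2xyc`. For `y > K x` both `u` and `v` lie between
`(1 - 2/K) y²` and `(1 + 1/K)² y²`, and Bernoulli's inequality gives
`u ^ (-p) - v ^ (-p) ≥ p (v - u) / v ^ (p + 1)` with `v - u = 4xyc`. Hence the bracket is at
most `x / y ^ (2p) * (2 - 4 p c² + o(1))` as `K → ∞`. Since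
`(2λ + 1) ∫ sin ^ (2λ-1) cos² = ∫ sin ^ (2λ-1)` on `[0, π/2]` and `4 (λ + 1) / (2λ + 1) > 2`,
the integral is a negative multiple of `x / y ^ (2λ + 2)` once `K` is large, and
`R = -(2λ/π) ∫ …` is a positive one.
-/

lemma one_div_rpow_sub_one_div_rpow_ge {p u v : ℝ} (hp : 1 ≤ p) (hu : 0 < u) (huv : u ≤ v) :
    p * (v - u) / v ^ (p + 1) ≤ 1 / u ^ p - 1 / v ^ p := by
  have hv : 0 < v := hu.trans_le huv
  have hup : 0 < u ^ p := rpow_pos_of_pos hu p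
  have hvp : 0 < v ^ p := rpow_pos_of_pos hv p
  have bernoulli : 1 + p * ((v - u) / u) ≤ v ^ p / u ^ p := by
    have h := one_add_mul_self_le_rpow_one_add
      (by linarith [div_nonneg (sub_nonneg.2 huv) hu.le] : -1 ≤ (v - u) / u) hp
    rwa [show 1 + (v - u) / u = v / u by field_simp; ring, div_rpow hv.le hu.le] at h
  have hvu : p * ((v - u) / v) ≤ p * ((v - u) / u) :=
    mul_le_mul_of_nonneg_left (div_le_div_of_nonneg_left (by linarith) hu huv) (by linarith)
  calc p * (v - u) / v ^ (p + 1) = p * ((v - u) / v) / v ^ p := by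
        rw [rpow_add_one hv.ne']; field_simp
    _ ≤ (v ^ p / u ^ p - 1) / v ^ p := by gcongr; linarith
    _ = 1 / u ^ p - 1 / v ^ p := by field_simp

lemma sub_div_rpow_add_add_div_rpow_le {p x y c α β : ℝ} (hp : 1 ≤ p) (hx : 0 ≤ x)
    (hy : 0 < y) (hc : 0 ≤ c) (hα : 0 < α) (hu : α * y ^ 2 ≤ x ^ 2 + y ^ 2 - 2 * x * y * c)
    (hv : x ^ 2 + y ^ 2 + 2 * x * y * c ≤ β * y ^ 2) :
    (x - y * c) / (x ^ 2 + y ^ 2 - 2 * x * y * c) ^ p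
        + (x + y * c) / (x ^ 2 + y ^ 2 + 2 * x * y * c) ^ p
      ≤ x / (y ^ 2) ^ p * (2 / α ^ p - 4 * p * c ^ 2 / β ^ (p + 1)) := by
  set u := x ^ 2 + y ^ 2 - 2 * x * y * c
  set v := x ^ 2 + y ^ 2 + 2 * x * y * c
  have hy2 : 0 < y ^ 2 := by positivity
  have hu0 : 0 < u := lt_of_lt_of_le (by positivity) hu
  have huv : u ≤ v := by nlinarith [mul_nonneg (mul_nonneg hx hy.le) hc]
  have hv0 : 0 < v := hu0.trans_le huv
  have hβ : 0 < β := pos_of_mul_pos_left (hv0.trans_le hv) hy2.le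
  have hup : 1 / u ^ p ≤ 1 / (α ^ p * (y ^ 2) ^ p) := by
    rw [← mul_rpow hα.le hy2.le]
    gcongr
  have hvp : 1 / v ^ p ≤ 1 / u ^ p := by gcongr
  have hdiff :
      4 * p * x * y * c / (β ^ (p + 1) * ((y ^ 2) ^ p * y ^ 2)) ≤ 1 / u ^ p - 1 / v ^ p := by
    refine le_trans ?_ (one_div_rpow_sub_one_div_rpow_ge hp hu0 huv)
    rw [show v - u = 4 * x * y * c by ring, ← rpow_add_one hy2.ne', ← mul_rpow hβ.le hy2.le]
    calc 4 * p * x * y * c / (β * y ^ 2) ^ (p + 1) ≤ 4 * p * x * y * c / v ^ (p + 1) := by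
          gcongr
      _ = p * (4 * x * y * c) / v ^ (p + 1) := by ring
  calc (x - y * c) / u ^ p + (x + y * c) / v ^ p
      = x * (1 / u ^ p) + x * (1 / v ^ p) - y * c * (1 / u ^ p - 1 / v ^ p) := by ring
    _ ≤ x * (1 / (α ^ p * (y ^ 2) ^ p)) + x * (1 / (α ^ p * (y ^ 2) ^ p))
        - y * c * (4 * p * x * y * c / (β ^ (p + 1) * ((y ^ 2) ^ p * y ^ 2))) := by
      gcongr x * ?_ + x * ?_ - y * c * ?_
      exact hvp.trans hup
    _ = x / (y ^ 2) ^ p * (2 / α ^ p - 4 * p * c ^ 2 / β ^ (p + 1)) := by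
      field_simp
      ring

lemma intervalIntegrable_sin_rpow_zero_pi_div_two {q : ℝ} (hq : -1 < q) :
    IntervalIntegrable (fun θ => sin θ ^ q) volume 0 (π / 2) := by
  rcases le_or_gt 0 q with hq0 | hq0
  · exact (continuous_sin.rpow_const fun _ => Or.inr hq0).intervalIntegrable _ _
  -- Jordan's inequality `2θ/π ≤ sin θ` dominates `sin θ ^ q` by a multiple of `θ ^ q`.
  refine ((intervalIntegral.intervalIntegrable_rpow' hq).const_mul ((2 / π) ^ q)).mono_fun'
    (continuous_sin.measurable.pow_const q).aestronglyMeasurable ?_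
  rw [EventuallyLE, ae_restrict_iff' measurableSet_uIoc]
  refine .of_forall fun θ hθ => ?_
  rw [uIoc_of_le (by positivity)] at hθ
  have hsin : 0 < 2 / π * θ := mul_pos (by positivity) hθ.1
  rw [norm_of_nonneg (rpow_nonneg (hsin.le.trans (mul_le_sin hθ.1.le hθ.2)) q),
    ← mul_rpow (by positivity) hθ.1.le]
  exact rpow_le_rpow_of_nonpos hsin (mul_le_sin hθ.1.le hθ.2) hq0.le

lemma intervalIntegrable_sin_rpow_zero_pi {q : ℝ} (hq : -1 < q) :
    IntervalIntegrable (fun θ => sin θ ^ q) volume 0 π := by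
  have h := intervalIntegrable_sin_rpow_zero_pi_div_two hq
  refine h.trans ?_
  simpa only [sin_pi_sub, sub_zero, sub_half] using (h.comp_sub_left π).symm

lemma integral_sin_rpow_mul_cos_sq {q : ℝ} (hq : -1 < q) :
    (q + 2) * ∫ θ in (0 : ℝ)..(π / 2), sin θ ^ q * cos θ ^ 2
      = ∫ θ in (0 : ℝ)..(π / 2), sin θ ^ q := by
  have hI := intervalIntegrable_sin_rpow_zero_pi_div_two hq
  have hI₂ : IntervalIntegrable (fun θ => sin θ ^ q * cos θ ^ 2) volume 0 (π / 2) :=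
    hI.mul_continuousOn (by fun_prop)
  -- `θ ↦ cos θ * sin θ ^ (q + 1)` is a primitive vanishing at both ends.
  have hderiv : ∀ θ ∈ Ioo 0 (π / 2), HasDerivAt (fun t => cos t * sin t ^ (q + 1))
      ((q + 2) * (sin θ ^ q * cos θ ^ 2) - sin θ ^ q) θ := by
    intro θ hθ
    have hsin : 0 < sin θ := sin_pos_of_pos_of_lt_pi hθ.1 (by linarith [hθ.2, pi_pos])
    refine ((hasDerivAt_cos θ).mul ((hasDerivAt_sin θ).rpow_const (p := q + 1)
      (Or.inl hsin.ne'))).congr_deriv ?_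
    rw [add_sub_cancel_right, rpow_add_one hsin.ne']
    linear_combination -sin θ ^ q * sin_sq_add_cos_sq θ
  have hftc := intervalIntegral.integral_eq_sub_of_hasDerivAt_of_le (by positivity)
    ((continuous_cos.mul (continuous_sin.rpow_const fun _ => Or.inr (by linarith))).continuousOn)
    hderiv ((hI₂.const_mul (q + 2)).sub hI)
  rw [intervalIntegral.integral_sub (hI₂.const_mul (q + 2)) hI,
    intervalIntegral.integral_const_mul] at hftc
  simp only [Pi.mul_apply, cos_pi_div_two, zero_mul, cos_zero, sin_zero, one_mul,
    zero_rpow (by linarith : q + 1 ≠ 0), sub_zero] at hftc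
  linarith

lemma integral_sin_rpow_pos {q : ℝ} (hq : -1 < q) :
    0 < ∫ θ in (0 : ℝ)..(π / 2), sin θ ^ q :=
  intervalIntegral.intervalIntegral_pos_of_pos_on
    (intervalIntegrable_sin_rpow_zero_pi_div_two hq)
    (fun _ hθ => rpow_pos_of_pos (sin_pos_of_pos_of_lt_pi hθ.1 (by linarith [hθ.2, pi_pos])) _)
    (by positivity)

lemma eventually_two_div_rpow_lt {p r : ℝ} (hr : 2 < r) :
    ∀ᶠ K in atTop, 2 / (1 - 2 / K) ^ p < r / ((1 + 1 / K) ^ 2) ^ (p + 1) := by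
  have hφ :
      ContinuousAt (fun ε : ℝ => r / ((1 + ε) ^ 2) ^ (p + 1) - 2 / (1 - 2 * ε) ^ p) 0 := by
    fun_prop (disch := norm_num)
  have hlim := hφ.tendsto.comp tendsto_inv_atTop_zero
  simp only [Function.comp_def, add_zero, mul_zero, sub_zero, one_pow, one_rpow, div_one] at hlim
  filter_upwards [hlim.eventually_const_lt (sub_pos.2 hr)] with K hK
  simpa only [one_div, div_eq_mul_inv 2 K, sub_pos] using hK

lemma IntervalIntegrable.zero_pi_div_two_and_comp_pi_sub {f : ℝ → ℝ}
    (hf : IntervalIntegrable f volume 0 π) :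
    IntervalIntegrable f volume 0 (π / 2) ∧
      IntervalIntegrable (fun θ => f (π - θ)) volume 0 (π / 2) := by
  have hsub : uIcc 0 (π / 2) ⊆ uIcc 0 π := by
    rw [uIcc_of_le pi_pos.le, uIcc_of_le (by positivity)]; gcongr; linarith [pi_pos]
  have hf' : IntervalIntegrable (fun θ => f (π - θ)) volume 0 π := by
    simpa only [sub_self, sub_zero] using (hf.comp_sub_left π).symm
  exact ⟨hf.mono_set hsub, hf'.mono_set hsub⟩

lemma integral_zero_pi_eq_integral_add_comp_pi_sub {f : ℝ → ℝ}
    (hf : IntervalIntegrable f volume 0 π) :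
    ∫ θ in (0 : ℝ)..π, f θ = ∫ θ in (0 : ℝ)..(π / 2), (f θ + f (π - θ)) := by
  obtain ⟨h₁, h₂⟩ := hf.zero_pi_div_two_and_comp_pi_sub
  rw [intervalIntegral.integral_add h₁ h₂, intervalIntegral.integral_comp_sub_left, sub_zero,
    sub_half, ← intervalIntegral.integral_interval_sub_left hf h₁]
  ring

noncomputable def rieszIntegrand (lam x y θ : ℝ) : ℝ :=
  ((x - y * cos θ) * sin θ ^ (2 * lam - 1)) / ((x ^ 2 + y ^ 2 - 2 * x * y * cos θ) ^ (lam + 1))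

lemma intervalIntegrable_rieszIntegrand {lam x y : ℝ} (hlam : 0 < lam) (hx : 0 ≤ x)
    (hy : 0 ≤ y) (hxy : x ≠ y) : IntervalIntegrable (rieszIntegrand lam x y) volume 0 π := by
  have hD : ∀ θ, 0 < x ^ 2 + y ^ 2 - 2 * x * y * cos θ := fun θ => by
    have := sq_pos_of_ne_zero (sub_ne_zero.2 hxy)
    nlinarith [mul_nonneg (mul_nonneg hx hy) (sub_nonneg.2 (cos_le_one θ))]
  have hcont :
      Continuous fun θ => (x - y * cos θ) / (x ^ 2 + y ^ 2 - 2 * x * y * cos θ) ^ (lam + 1) :=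
    (by fun_prop : Continuous fun θ => x - y * cos θ).div
      ((by fun_prop : Continuous fun θ => x ^ 2 + y ^ 2 - 2 * x * y * cos θ).rpow_const
        fun θ => Or.inl (hD θ).ne')
      fun θ => (rpow_pos_of_pos (hD θ) _).ne'
  convert (intervalIntegrable_sin_rpow_zero_pi (by linarith : -1 < 2 * lam - 1)).mul_continuousOn
    hcont.continuousOn using 1
  funext θ
  simp only [rieszIntegrand]
  ring

lemma rieszIntegrand_add_comp_pi_sub_le {lam K x y θ : ℝ} (hlam : 0 < lam) (hK : 2 < K)
    (hx : 0 < x) (hxy : K * x < y) (hθ : θ ∈ Icc 0 (π / 2)) :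
    rieszIntegrand lam x y θ + rieszIntegrand lam x y (π - θ)
      ≤ sin θ ^ (2 * lam - 1) * (x / (y ^ 2) ^ (lam + 1) *
          (2 / (1 - 2 / K) ^ (lam + 1)
            - 4 * (lam + 1) * cos θ ^ 2 / ((1 + 1 / K) ^ 2) ^ (lam + 1 + 1))) := by
  have hy : 0 < y := by nlinarith
  have hxK : x < y / K := by rwa [lt_div_iff₀ (by linarith), mul_comm]
  have hc0 : 0 ≤ cos θ := cos_nonneg_of_mem_Icc ⟨by linarith [hθ.1, pi_pos], hθ.2⟩
  have hc1 := cos_le_one θ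
  have hα : 0 < 1 - 2 / K := by rw [sub_pos, div_lt_one (by linarith)]; exact hK
  have hu : (1 - 2 / K) * y ^ 2 ≤ x ^ 2 + y ^ 2 - 2 * x * y * cos θ := by
    have : 2 * x * y * cos θ ≤ 2 * (y / K) * y := by nlinarith [mul_nonneg hx.le hy.le]
    nlinarith [show 2 / K * y ^ 2 = 2 * (y / K) * y by ring]
  have hv : x ^ 2 + y ^ 2 + 2 * x * y * cos θ ≤ (1 + 1 / K) ^ 2 * y ^ 2 := by
    have : x + y ≤ (1 + 1 / K) * y := by rw [add_mul, one_mul, one_div_mul_eq_div]; linarith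
    nlinarith [mul_nonneg hx.le hy.le]
  have hreflect : rieszIntegrand lam x y θ + rieszIntegrand lam x y (π - θ)
      = sin θ ^ (2 * lam - 1) *
          ((x - y * cos θ) / (x ^ 2 + y ^ 2 - 2 * x * y * cos θ) ^ (lam + 1)
            + (x + y * cos θ) / (x ^ 2 + y ^ 2 + 2 * x * y * cos θ) ^ (lam + 1)) := by
    simp only [rieszIntegrand, cos_pi_sub, sin_pi_sub]
    ring_nf
  rw [hreflect]
  exact mul_le_mul_of_nonneg_left
    (sub_div_rpow_add_add_div_rpow_le (by linarith) hx.le hy hc0 hα hu hv)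
    (rpow_nonneg (sin_nonneg_of_nonneg_of_le_pi hθ.1 (by linarith [hθ.2, pi_pos])) _)

lemma integral_rieszIntegrand_le {lam K x y : ℝ} (hlam : 0 < lam) (hK : 2 < K) (hx : 0 < x)
    (hxy : K * x < y) :
    ∫ θ in (0 : ℝ)..π, rieszIntegrand lam x y θ
      ≤ x / (y ^ 2) ^ (lam + 1) * (2 / (1 - 2 / K) ^ (lam + 1)
          - 4 * (lam + 1) / (2 * lam + 1) / ((1 + 1 / K) ^ 2) ^ (lam + 1 + 1))
        * ∫ θ in (0 : ℝ)..(π / 2), sin θ ^ (2 * lam - 1) := by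
  have hy : 0 < y := by nlinarith
  have hf := intervalIntegrable_rieszIntegrand hlam hx.le hy.le (by nlinarith)
  have hq : -1 < 2 * lam - 1 := by linarith
  have hI := intervalIntegrable_sin_rpow_zero_pi_div_two hq
  have hI₂ :
      IntervalIntegrable (fun θ => sin θ ^ (2 * lam - 1) * cos θ ^ 2) volume 0 (π / 2) :=
    hI.mul_continuousOn (by fun_prop)
  have hWallis := integral_sin_rpow_mul_cos_sq hq
  rw [show 2 * lam - 1 + 2 = 2 * lam + 1 by ring] at hWallis
  set a := x / (y ^ 2) ^ (lam + 1) * (2 / (1 - 2 / K) ^ (lam + 1))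
  set b := x / (y ^ 2) ^ (lam + 1) * (4 * (lam + 1) / ((1 + 1 / K) ^ 2) ^ (lam + 1 + 1))
  have hbound : ∀ θ ∈ Icc 0 (π / 2),
      rieszIntegrand lam x y θ + rieszIntegrand lam x y (π - θ)
      ≤ a * sin θ ^ (2 * lam - 1) - b * (sin θ ^ (2 * lam - 1) * cos θ ^ 2) := fun θ hθ =>
    (rieszIntegrand_add_comp_pi_sub_le hlam hK hx hxy hθ).trans_eq (by ring)
  rw [integral_zero_pi_eq_integral_add_comp_pi_sub hf]
  obtain ⟨hf₁, hf₂⟩ := hf.zero_pi_div_two_and_comp_pi_sub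
  refine (intervalIntegral.integral_mono_on (by positivity) (hf₁.add hf₂)
    ((hI.const_mul a).sub (hI₂.const_mul b)) hbound).trans_eq ?_
  rw [intervalIntegral.integral_sub (hI.const_mul a) (hI₂.const_mul b),
    intervalIntegral.integral_const_mul, intervalIntegral.integral_const_mul, ← hWallis]
  simp only [a, b]
  field_simp

/-- Lower bound: there exist `K₁ > 2` and `C > 0` such that for `y > K₁ x`,
`R_{Δ_λ}(x,y) ≥ C x / y^{2λ+2}`. -/
theorem riesz_kernel_lower_bound_far (lam : ℝ) (hlam : 0 < lam) :
    ∃ K₁ C : ℝ, 2 < K₁ ∧ 0 < C ∧ ∀ x y : ℝ, 0 < x → 0 < y → K₁ * x < y →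
      C * x / y ^ (2*lam + 2) ≤ rieszKernel lam x y := by
  have hr : 2 < 4 * (lam + 1) / (2 * lam + 1) := by
    rw [lt_div_iff₀ (by linarith)]; linarith
  obtain ⟨K, hδ, hK⟩ := ((eventually_two_div_rpow_lt (p := lam + 1) hr).and
    (eventually_gt_atTop 2)).exists
  have hI₀ := integral_sin_rpow_pos (q := 2 * lam - 1) (by linarith)
  refine ⟨K, 2 * lam / π * ((4 * (lam + 1) / (2 * lam + 1) / ((1 + 1 / K) ^ 2) ^ (lam + 1 + 1)
    - 2 / (1 - 2 / K) ^ (lam + 1)) * ∫ θ in (0 : ℝ)..(π / 2), sin θ ^ (2 * lam - 1)),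
    hK, by have := sub_pos.2 hδ; positivity, fun x y hx hy hxy => ?_⟩
  have hpow : (y ^ 2) ^ (lam + 1) = y ^ (2 * lam + 2) := by
    rw [← rpow_natCast, ← rpow_mul hy.le]; push_cast; ring_nf
  calc _ = -(2 * lam / π) * (x / (y ^ 2) ^ (lam + 1) * (2 / (1 - 2 / K) ^ (lam + 1)
          - 4 * (lam + 1) / (2 * lam + 1) / ((1 + 1 / K) ^ 2) ^ (lam + 1 + 1))
        * ∫ θ in (0 : ℝ)..(π / 2), sin θ ^ (2 * lam - 1)) := by rw [hpow]; ring
    _ ≤ -(2 * lam / π) * ∫ θ in (0 : ℝ)..π, rieszIntegrand lam x y θ :=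
      mul_le_mul_of_nonpos_left (integral_rieszIntegrand_le hlam hK hx hxy)
        (neg_nonpos.2 (by positivity))
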